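/- arXiv:2401.13152 — 2 statements merged into one kernel-verified Lean document; each statement's English description precedes it below -/
import Mathlib

section
/- Let α > 0, μ = ±1, A ∈ ℂ \ {0}, n ∈ ℤ \ {0} with |n| < 2M, and s ∈ ℝ. Set B = (e^{ihn} − 1)/(ihn). Then the function u_h(x,t) = A |n|^{−s} B e^{−it( |(2/h) sin(hn/2)|^α + μ|A|² |n|^{−2s} |B|² )} e^{inx}, x ∈ 𝕋_h, solves the fractional discrete NLS i∂_t u_h = (−Δ_h)^{α/2} u_h + μ|u_h|²u_h with initial datum d_h u₀ where u₀(x) = A |n|^{−s} e^{inx}; in particular d_h u₀(x) = A |n|^{−s} B e^{inx} for x ∈ 𝕋_h. -/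
open scoped BigOperators ENNReal NNReal
open MeasureTheory

noncomputable section

/-- Mesh size `h = π / M`. -/
def mesh (M : ℕ) : ℝ := Real.pi / M

/-- Index set `{-M, …, M-1}` for the periodic lattice `𝕋_h` and its dual `𝕋_h*`. -/
def idx (M : ℕ) : Finset ℤ := Finset.Icc (-(M : ℤ)) ((M : ℤ) - 1)

/-- Lattice point `x = h j`. -/
def pt (M : ℕ) (j : ℤ) : ℝ := mesh M * j

/-- Discrete `L^p_h` norm (finite `p`), w.r.t. the normalized counting measure. -/
def dLp (M : ℕ) (p : ℝ) (f : ℤ → ℂ) : ℝ :=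
  (mesh M * ∑ j ∈ idx M, ‖f j‖ ^ p) ^ (1 / p)

/-- Discrete `L^∞_h` norm. -/
def dLinf (M : ℕ) (f : ℤ → ℂ) : ℝ :=
  ⨆ j : (idx M), ‖f (j : ℤ)‖

/-- Discrete Fourier transform `𝓕_h f (k) = h ∑_{x ∈ 𝕋_h} f(x) e^{-ikx}`. -/
def dFT (M : ℕ) (f : ℤ → ℂ) (k : ℤ) : ℂ :=
  (mesh M : ℂ) * ∑ j ∈ idx M, f j * Complex.exp (-Complex.I * (k : ℂ) * (pt M j : ℂ))

/-- Discrete Sobolev norm `‖f‖_{H^s_h}`. -/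
def dSob (M : ℕ) (s : ℝ) (f : ℤ → ℂ) : ℝ :=
  Real.sqrt ((2 * Real.pi)⁻¹ * ∑ k ∈ idx M, (1 + (k : ℝ) ^ 2) ^ s * ‖dFT M f k‖ ^ 2)

/-- Symbol `σ_h(ξ) = |(2/h) sin(hξ/2)|^α` of the discrete fractional Laplacian. -/
def dsymb (M : ℕ) (α ξ : ℝ) : ℝ := |2 / mesh M * Real.sin (mesh M * ξ / 2)| ^ α

/-- Discrete linear propagator `U_h(t) = e^{-it(-Δ_h)^{α/2}}`. -/
def Uh (M : ℕ) (α t : ℝ) (f : ℤ → ℂ) (j : ℤ) : ℂ :=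
  (2 * Real.pi)⁻¹ * ∑ k ∈ idx M,
    Complex.exp (-Complex.I * (t : ℂ) * ((dsymb M α k : ℝ) : ℂ)) * dFT M f k *
      Complex.exp (Complex.I * (k : ℂ) * (pt M j : ℂ))

/-- Fourier coefficient on the torus `𝕋 = [-π, π)`. -/
def fCoef (f : ℝ → ℂ) (k : ℤ) : ℂ :=
  ∫ x in (-Real.pi)..Real.pi, f x * Complex.exp (-Complex.I * (k : ℂ) * (x : ℂ))

/-- `L²(𝕋)` norm. -/
def cL2 (f : ℝ → ℂ) : ℝ :=
  Real.sqrt (∫ x in (-Real.pi)..Real.pi, ‖f x‖ ^ 2)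

/-- Sobolev `H^s(𝕋)` norm. -/
def cSob (s : ℝ) (f : ℝ → ℂ) : ℝ :=
  Real.sqrt ((2 * Real.pi)⁻¹ * ∑' k : ℤ, (1 + (k : ℝ) ^ 2) ^ s * ‖fCoef f k‖ ^ 2)

/-- Membership in `H^s(𝕋)`. -/
def inHs (s : ℝ) (f : ℝ → ℂ) : Prop :=
  Summable fun k : ℤ => (1 + (k : ℝ) ^ 2) ^ s * ‖fCoef f k‖ ^ 2

/-- Continuum propagator `U(t) = e^{-it(-Δ)^{α/2}}` on the torus. -/
def Uc (α t : ℝ) (f : ℝ → ℂ) (x : ℝ) : ℂ :=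
  (2 * Real.pi)⁻¹ * ∑' k : ℤ,
    Complex.exp (-Complex.I * (t : ℂ) * ((|(k : ℝ)| ^ α : ℝ) : ℂ)) * fCoef f k *
      Complex.exp (Complex.I * (k : ℂ) * (x : ℂ))

/-- Discretization operator `d_h f (x) = h⁻¹ ∫_x^{x+h} f`. -/
def dh (M : ℕ) (f : ℝ → ℂ) (j : ℤ) : ℂ :=
  ((mesh M : ℝ) : ℂ)⁻¹ * ∫ x in (pt M j)..(pt M j + mesh M), f x

/-- Linear interpolation operator `p_h`. -/
def ph (M : ℕ) (g : ℤ → ℂ) (x : ℝ) : ℂ :=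
  g ⌊x / mesh M⌋ + (g (⌊x / mesh M⌋ + 1) - g ⌊x / mesh M⌋) *
    (((x - pt M ⌊x / mesh M⌋) / mesh M : ℝ) : ℂ)

/-- Cubic nonlinearity `|f|² f` on the lattice. -/
def cubic (f : ℤ → ℂ) (j : ℤ) : ℂ := ((‖f j‖ ^ 2 : ℝ) : ℂ) * f j

/-- Cubic nonlinearity `|f|² f` on the torus. -/
def cubicC (f : ℝ → ℂ) (x : ℝ) : ℂ := ((‖f x‖ ^ 2 : ℝ) : ℂ) * f x

/-- `u` solves the fractional discrete NLS with datum `u0` on the time set `I`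
(Duhamel formulation). -/
def IsDSol (M : ℕ) (α μ : ℝ) (I : Set ℝ) (u0 : ℤ → ℂ) (u : ℝ → ℤ → ℂ) : Prop :=
  (∀ j : ℤ, u 0 j = u0 j) ∧
  ∀ t ∈ I, ∀ j : ℤ, u t j =
    Uh M α t u0 j - Complex.I * (μ : ℂ) * ∫ τ in (0:ℝ)..t, Uh M α (t - τ) (cubic (u τ)) j

/-- `u` solves the fractional NLS on the torus with datum `u0` on the time set `I`
(Duhamel formulation). -/
def IsCSol (α μ : ℝ) (I : Set ℝ) (u0 : ℝ → ℂ) (u : ℝ → ℝ → ℂ) : Prop :=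
  (∀ x : ℝ, u 0 x = u0 x) ∧
  ∀ t ∈ I, ∀ x : ℝ, u t x =
    Uc α t u0 x - Complex.I * (μ : ℂ) * ∫ τ in (0:ℝ)..t, Uc α (t - τ) (cubicC (u τ)) x


/-- Discrete fractional Laplacian `(-Δ_h)^{α/2}`, the Fourier multiplier with symbol
`σ_h(k)` on the lattice. -/
def dFracLap (M : ℕ) (α : ℝ) (f : ℤ → ℂ) (j : ℤ) : ℂ :=
  (2 * Real.pi)⁻¹ * ∑ k ∈ idx M,
    ((dsymb M α k : ℝ) : ℂ) * dFT M f k * Complex.exp (Complex.I * (k : ℂ) * (pt M j : ℂ))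

/-!
On the lattice, `x ↦ e^{inx}` is the character `j ↦ ζ^{nj}` of `ℤ/2Mℤ`, with `ζ = e^{iπ/M}` a
primitive `2M`-th root of unity. Orthogonality of characters makes its discrete Fourier transform
a single spike at the representative of `n` modulo `2M` in `𝕋_h*`; as both the character and the
symbol `σ_h` are `2M`-periodic in the frequency, `e^{inx}` is an eigenfunction of `(-Δ_h)^{α/2}`
with eigenvalue `σ_h(n)`. The modulus of `u_h` is constant in `x` and `t`, so the cubic term is
multiplication by `μ|A|²|n|^{-2s}|B|²`, and `i∂_t` applied to the time phase returns exactly the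
sum of the two frequencies. Finally `d_h e^{inx}` is an elementary integral, which produces `B`.
-/

open Complex
open scoped Real

section Lattice

variable {M : ℕ}

lemma mesh_ne_zero (hM : M ≠ 0) : mesh M ≠ 0 :=
  div_ne_zero Real.pi_ne_zero (Nat.cast_ne_zero.mpr hM)

lemma isPrimitiveRoot_exp_pi_mul_I_div (hM : M ≠ 0) :
    IsPrimitiveRoot (exp (π * I / M)) (2 * M) := by
  convert isPrimitiveRoot_exp (2 * M) (by omega) using 2
  push_cast
  field_simp

lemma exp_I_mul_pt (m j : ℤ) : exp (I * m * pt M j) = exp (π * I / M) ^ (m * j) := by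
  rw [← exp_int_mul, pt, mesh]
  push_cast
  ring_nf

lemma card_idx : (idx M).card = 2 * M := by
  simp only [idx, Int.card_Icc]
  omega

lemma exists_mem_idx_dvd_sub (hM : M ≠ 0) (n : ℤ) : ∃ k ∈ idx M, (2 * M : ℤ) ∣ n - k := by
  have hM' : (0 : ℤ) < 2 * M := by omega
  refine ⟨(n + M) % (2 * M) - M, ?_, ?_⟩
  · have := Int.emod_nonneg (n + M) hM'.ne'
    have := Int.emod_lt_of_pos (n + M) hM'
    simp only [idx, Finset.mem_Icc]
    omega
  · exact ⟨(n + M) / (2 * M), by rw [Int.emod_def]; ring⟩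

lemma eq_of_mem_idx_of_dvd_sub {k k' : ℤ} (hk : k ∈ idx M) (hk' : k' ∈ idx M)
    (h : (2 * M : ℤ) ∣ k - k') : k = k' := by
  simp only [idx, Finset.mem_Icc] at hk hk'
  have := Int.eq_zero_of_abs_lt_dvd h (abs_lt.mpr ⟨by omega, by omega⟩)
  omega

lemma sum_idx_eq_sum_range {β : Type*} [AddCommMonoid β] (f : ℤ → β) :
    ∑ j ∈ idx M, f j = ∑ i ∈ Finset.range (2 * M), f (i - M) := by
  refine Finset.sum_nbij' (fun j => (j + M).toNat) (fun i => (i : ℤ) - M) ?_ ?_ ?_ ?_ ?_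
    <;> intro i hi <;> simp only [idx, Finset.mem_Icc, Finset.mem_range] at hi ⊢
  all_goals first | omega | exact congrArg f (by omega)

lemma sum_idx_zpow_eq_zero (hM : M ≠ 0) {w : ℂ} (hw : w ^ (2 * M) = 1) (hw₁ : w ≠ 1) :
    ∑ j ∈ idx M, w ^ j = 0 := by
  have hw₀ : w ≠ 0 := by rintro rfl; simp [hM] at hw
  have hgeom : ∑ i ∈ Finset.range (2 * M), w ^ i = 0 := by
    have := geom_sum_mul w (2 * M)
    rw [hw, sub_self, mul_eq_zero] at this
    exact this.resolve_right (sub_ne_zero.mpr hw₁)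
  simp_rw [sum_idx_eq_sum_range, zpow_sub₀ hw₀, zpow_natCast, ← Finset.sum_div, hgeom,
    zero_div]

lemma sum_idx_exp_I_mul_pt (hM : M ≠ 0) (m : ℤ) :
    ∑ j ∈ idx M, exp (I * m * pt M j) = if (2 * M : ℤ) ∣ m then (2 * M : ℂ) else 0 := by
  have hζ := isPrimitiveRoot_exp_pi_mul_I_div hM
  simp_rw [exp_I_mul_pt, zpow_mul]
  split_ifs with hm
  · rw [(hζ.zpow_eq_one_iff_dvd m).mpr (mod_cast hm)]
    simp [card_idx]
  · refine sum_idx_zpow_eq_zero hM ?_ ?_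
    · rw [← zpow_natCast, ← zpow_mul, mul_comm m, zpow_mul, hζ.zpow_eq_one, one_zpow]
    · rwa [Ne, hζ.zpow_eq_one_iff_dvd, Nat.cast_mul, Nat.cast_ofNat]

lemma exp_I_mul_pt_eq_of_dvd (hM : M ≠ 0) {n k : ℤ} (h : (2 * M : ℤ) ∣ n - k) (j : ℤ) :
    exp (I * n * pt M j) = exp (I * k * pt M j) := by
  have hζ := isPrimitiveRoot_exp_pi_mul_I_div hM
  have hperiod : exp (π * I / M) ^ ((n - k) * j) = 1 :=
    (hζ.zpow_eq_one_iff_dvd _).mpr (by exact_mod_cast h.mul_right j)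
  rw [exp_I_mul_pt, exp_I_mul_pt, ← sub_add_cancel n k, add_mul, zpow_add₀ (exp_ne_zero _),
    hperiod, one_mul]

lemma dsymb_eq_of_dvd (hM : M ≠ 0) (α : ℝ) {n k : ℤ} (h : (2 * M : ℤ) ∣ n - k) :
    dsymb M α n = dsymb M α k := by
  obtain ⟨l, hl⟩ := h
  have harg : mesh M * n / 2 = mesh M * k / 2 + l * π := by
    have hn : (n : ℝ) = k + 2 * M * l := by exact_mod_cast (by omega : n = k + 2 * M * l)
    rw [hn, mesh]
    field_simp
  rw [dsymb, dsymb, harg, Real.sin_add_int_mul_pi, mul_left_comm, abs_mul (_ ^ l),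
    abs_neg_one_zpow, one_mul]

lemma dFT_const_mul_exp (hM : M ≠ 0) (a : ℂ) (n k : ℤ) :
    dFT M (fun j => a * exp (I * n * pt M j)) k =
      if (2 * M : ℤ) ∣ n - k then 2 * π * a else 0 := by
  have hmerge : ∀ j, a * exp (I * n * pt M j) * exp (-I * k * pt M j) =
      a * exp (I * (n - k : ℤ) * pt M j) := fun j => by
    rw [mul_assoc, ← exp_add]
    push_cast
    ring_nf
  simp_rw [dFT, hmerge, ← Finset.mul_sum, sum_idx_exp_I_mul_pt hM]
  split_ifs
  · rw [mesh]
    push_cast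
    field_simp
  · simp

lemma dFracLap_const_mul_exp (hM : M ≠ 0) (α : ℝ) (a : ℂ) (n j : ℤ) :
    dFracLap M α (fun j => a * exp (I * n * pt M j)) j =
      dsymb M α n * (a * exp (I * n * pt M j)) := by
  obtain ⟨k₀, hk₀, hdvd⟩ := exists_mem_idx_dvd_sub hM n
  rw [dFracLap, Finset.sum_eq_single_of_mem k₀ hk₀]
  · rw [dFT_const_mul_exp hM, if_pos hdvd, dsymb_eq_of_dvd hM α hdvd,
      exp_I_mul_pt_eq_of_dvd hM hdvd j]
    push_cast
    field_simp
  · intro k hk hne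
    rw [dFT_const_mul_exp hM, if_neg, mul_zero, zero_mul]
    intro hk'
    refine hne (eq_of_mem_idx_of_dvd_sub hk hk₀ ?_)
    simpa only [sub_sub_sub_cancel_left] using dvd_sub hdvd hk'

lemma dh_const_mul_exp (hM : M ≠ 0) {n : ℤ} (hn : n ≠ 0) (a : ℂ) (j : ℤ) :
    dh M (fun x => a * exp (I * n * x)) j =
      a * ((exp (I * mesh M * n) - 1) / (I * mesh M * n)) * exp (I * n * pt M j) := by
  have hIn : I * n ≠ 0 := mul_ne_zero I_ne_zero (Int.cast_ne_zero.mpr hn)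
  have hmesh : (mesh M : ℂ) ≠ 0 := ofReal_ne_zero.mpr (mesh_ne_zero hM)
  rw [dh, intervalIntegral.integral_const_mul, integral_exp_mul_complex hIn]
  push_cast
  rw [mul_add, exp_add]
  field_simp

end Lattice

lemma I_mul_deriv_mul_exp_neg_I_mul (a b : ℂ) (ω t : ℝ) :
    I * deriv (fun τ : ℝ => a * exp (-I * τ * ω) * b) t = ω * (a * exp (-I * t * ω) * b) := by
  have hderiv : HasDerivAt (fun τ : ℝ => a * exp (-I * τ * ω) * b)
      (a * (exp (-I * t * ω) * (-I * 1 * ω)) * b) t :=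
    ((((hasDerivAt_id (t : ℂ)).const_mul (-I)).mul_const (ω : ℂ)).cexp.const_mul a
      |>.mul_const b).comp_ofReal
  rw [hderiv.deriv]
  linear_combination (-(a * exp (-I * t * ω) * b * ω)) * I_mul_I

theorem statement15_general (M : ℕ) (hM : 1 ≤ M) (α μ s : ℝ)
    (A : ℂ) (n : ℤ) (hn : n ≠ 0)
    (B : ℂ) (hB : B = (Complex.exp (Complex.I * (mesh M : ℂ) * (n : ℂ)) - 1) /
      (Complex.I * (mesh M : ℂ) * (n : ℂ)))
    (u0 : ℝ → ℂ)
    (hu0 : ∀ x : ℝ, u0 x = A * ((|(n : ℝ)| ^ (-s) : ℝ) : ℂ) *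
      Complex.exp (Complex.I * (n : ℂ) * (x : ℂ)))
    (uh : ℝ → ℤ → ℂ)
    (huh : ∀ t : ℝ, ∀ j : ℤ, uh t j =
      A * ((|(n : ℝ)| ^ (-s) : ℝ) : ℂ) * B *
        Complex.exp (-Complex.I * (t : ℂ) *
          ((|2 / mesh M * Real.sin (mesh M * n / 2)| ^ α
            + μ * ‖A‖ ^ 2 * |(n : ℝ)| ^ (-2 * s) * ‖B‖ ^ 2 : ℝ) : ℂ)) *
        Complex.exp (Complex.I * (n : ℂ) * ((pt M j : ℝ) : ℂ))) :
    (∀ t : ℝ, ∀ j : ℤ, Complex.I * deriv (fun τ : ℝ => uh τ j) t =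
        dFracLap M α (uh t) j + (μ : ℂ) * ((‖uh t j‖ ^ 2 : ℝ) : ℂ) * uh t j) ∧
    (∀ j : ℤ, uh 0 j = dh M u0 j) ∧
    (∀ j : ℤ, dh M u0 j = A * ((|(n : ℝ)| ^ (-s) : ℝ) : ℂ) * B *
        Complex.exp (Complex.I * (n : ℂ) * ((pt M j : ℝ) : ℂ))) := by
  have hM₀ : M ≠ 0 := by omega
  have hdh : ∀ j : ℤ, dh M u0 j = A * ((|(n : ℝ)| ^ (-s) : ℝ) : ℂ) * B *
      exp (I * n * pt M j) := by
    intro j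
    rw [show u0 = _ from funext hu0, dh_const_mul_exp hM₀ hn, hB]
  have hnorm : ∀ t j, ‖uh t j‖ ^ 2 = ‖A‖ ^ 2 * |(n : ℝ)| ^ (-2 * s) * ‖B‖ ^ 2 := by
    intro t j
    have htime : ∀ x y : ℝ, ‖exp (-I * x * y)‖ = 1 := fun x y => by simp [norm_exp]
    have hspace : ∀ (m : ℤ) (y : ℝ), ‖exp (I * m * y)‖ = 1 := fun m y => by simp [norm_exp]
    rw [huh, norm_mul, hspace, norm_mul, htime, mul_one, mul_one,
      norm_mul, norm_mul, norm_real, Real.norm_eq_abs, abs_of_nonneg (by positivity), mul_pow,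
      mul_pow, ← Real.rpow_mul_natCast (abs_nonneg _)]
    ring_nf
  refine ⟨fun t j => ?_, fun j => by rw [huh, hdh]; simp, hdh⟩
  rw [hnorm, show (fun τ => uh τ j) = _ from funext fun τ => huh τ j,
    I_mul_deriv_mul_exp_neg_I_mul, show uh t = _ from funext (huh t), dFracLap_const_mul_exp hM₀]
  push_cast [dsymb]
  ring

/-- Appendix B: discrete plane waves are exact solutions of the
fractional discrete NLS with datum `d_h u₀`. -/
theorem statement15 (M : ℕ) (hM : 1 ≤ M) (α μ s : ℝ) (hα : 0 < α) (hμ : μ = 1 ∨ μ = -1)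
    (A : ℂ) (hA : A ≠ 0) (n : ℤ) (hn : n ≠ 0) (hn2 : |n| < 2 * (M : ℤ))
    (B : ℂ) (hB : B = (Complex.exp (Complex.I * (mesh M : ℂ) * (n : ℂ)) - 1) /
      (Complex.I * (mesh M : ℂ) * (n : ℂ)))
    (u0 : ℝ → ℂ)
    (hu0 : ∀ x : ℝ, u0 x = A * ((|(n : ℝ)| ^ (-s) : ℝ) : ℂ) *
      Complex.exp (Complex.I * (n : ℂ) * (x : ℂ)))
    (uh : ℝ → ℤ → ℂ)
    (huh : ∀ t : ℝ, ∀ j : ℤ, uh t j =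
      A * ((|(n : ℝ)| ^ (-s) : ℝ) : ℂ) * B *
        Complex.exp (-Complex.I * (t : ℂ) *
          ((|2 / mesh M * Real.sin (mesh M * n / 2)| ^ α
            + μ * ‖A‖ ^ 2 * |(n : ℝ)| ^ (-2 * s) * ‖B‖ ^ 2 : ℝ) : ℂ)) *
        Complex.exp (Complex.I * (n : ℂ) * ((pt M j : ℝ) : ℂ))) :
    (∀ t : ℝ, ∀ j : ℤ, Complex.I * deriv (fun τ : ℝ => uh τ j) t =
        dFracLap M α (uh t) j + (μ : ℂ) * ((‖uh t j‖ ^ 2 : ℝ) : ℂ) * uh t j) ∧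
    (∀ j : ℤ, uh 0 j = dh M u0 j) ∧
    (∀ j : ℤ, dh M u0 j = A * ((|(n : ℝ)| ^ (-s) : ℝ) : ℂ) * B *
        Complex.exp (Complex.I * (n : ℂ) * ((pt M j : ℝ) : ℂ))) :=
  statement15_general M hM α μ s A n hn B hB u0 hu0 uh huh

end
end

section
/- Let α ∈ (1,2]. For every real θ with 0 < |θ| ≤ 1/10, one has 0 ≤ |θ/2|^α − |sin(θ/2)|^α ≤ (α/24) θ² |θ/2|^α. Consequently, for every h > 0, t ∈ ℝ, and k ∈ ℤ with |hk| ≤ 1/10, the phase difference between the discrete and continuum symbols obeys (2^α |t| / h^α) · | |sin(hk/2)|^α − |hk/2|^α | ≤ (α|t|/24) h² |k|^{2+α}. -/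
noncomputable section

open Real

/-- `x - x^3/6 ≤ sin x` for `x ≥ 0`. -/
lemma sin_lower {x : ℝ} (hx : 0 ≤ x) : x - x ^ 3 / 6 ≤ Real.sin x := by
  have key : Monotone (fun y : ℝ => Real.sin y - y + y ^ 3 / 6) := by
    have hder : ∀ y : ℝ, HasDerivAt (fun y : ℝ => Real.sin y - y + y ^ 3 / 6)
        (Real.cos y - 1 + y ^ 2 / 2) y := by
      intro y
      have h1 : HasDerivAt (fun y : ℝ => Real.sin y - y + y ^ 3 / 6)
          (Real.cos y - 1 + (3 : ℕ) * y ^ (3 - 1) / 6) y :=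
        ((Real.hasDerivAt_sin y).sub (hasDerivAt_id y)).add ((hasDerivAt_pow 3 y).div_const 6)
      convert h1 using 1
      push_cast
      ring
    apply monotone_of_deriv_nonneg
    · exact fun y => (hder y).differentiableAt
    · intro y
      rw [(hder y).deriv]
      have := Real.one_sub_sq_div_two_le_cos (x := y)
      nlinarith
  have h0 := key hx
  simp only [Real.sin_zero] at h0
  nlinarith

/-- For `0 ≤ s ≤ x`, `x * (x^α - s^α) ≤ α * x^α * (x - s)`. -/
lemma rpow_sub_rpow_le' {α s x : ℝ} (hα : 1 ≤ α) (hs : 0 ≤ s) (hsx : s ≤ x) (hx : 0 < x) :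
    x * (x ^ α - s ^ α) ≤ α * x ^ α * (x - s) := by
  set u : ℝ := s / x with hu
  have hu0 : 0 ≤ u := div_nonneg hs hx.le
  have hber : 1 + α * (u - 1) ≤ (1 + (u - 1)) ^ α :=
    one_add_mul_self_le_rpow_one_add (by linarith) hα
  rw [add_sub_cancel] at hber
  have hsxα : s ^ α = u ^ α * x ^ α := by
    rw [hu, ← Real.mul_rpow (div_nonneg hs hx.le) hx.le, div_mul_cancel₀ _ hx.ne']
  have hxα : (0:ℝ) < x ^ α := Real.rpow_pos_of_pos hx α
  have h1 : x ^ α - s ^ α ≤ x ^ α * (α * (1 - u)) := by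
    rw [hsxα]
    nlinarith [mul_le_mul_of_nonneg_right hber hxα.le]
  have h2 : x * (x ^ α * (α * (1 - u))) = α * x ^ α * (x - s) := by
    rw [hu]; field_simp
  nlinarith [mul_le_mul_of_nonneg_left h1 hx.le]

/-- estimates (4.7)–(4.8): comparison of the discrete and continuum
symbols, and the resulting phase-difference bound. -/
theorem statement18 (α : ℝ) (hα : 1 < α) (hα' : α ≤ 2) :
    (∀ θ : ℝ, 0 < |θ| → |θ| ≤ 1 / 10 →
      0 ≤ |θ / 2| ^ α - |Real.sin (θ / 2)| ^ α ∧
      |θ / 2| ^ α - |Real.sin (θ / 2)| ^ α ≤ α / 24 * θ ^ 2 * |θ / 2| ^ α) ∧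
    (∀ h t : ℝ, 0 < h → ∀ k : ℤ, |h * (k : ℝ)| ≤ 1 / 10 →
      2 ^ α * |t| / h ^ α * |(|Real.sin (h * k / 2)| ^ α - |h * (k : ℝ) / 2| ^ α)| ≤
        α * |t| / 24 * h ^ 2 * |(k : ℝ)| ^ (2 + α)) := by
  have main : ∀ θ : ℝ, 0 < |θ| → |θ| ≤ 1 / 10 →
      0 ≤ |θ / 2| ^ α - |Real.sin (θ / 2)| ^ α ∧
      |θ / 2| ^ α - |Real.sin (θ / 2)| ^ α ≤ α / 24 * θ ^ 2 * |θ / 2| ^ α := by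
    intro θ hθ0 hθ
    set x : ℝ := |θ| / 2 with hxdef
    have hx0 : 0 < x := by positivity
    have hx1 : x ≤ 1 / 20 := by rw [hxdef]; linarith
    have habs2 : |θ / 2| = x := by rw [hxdef, abs_div]; norm_num
    have hs0 : 0 ≤ Real.sin x := by
      apply Real.sin_nonneg_of_nonneg_of_le_pi hx0.le
      nlinarith [Real.pi_gt_three]
    have hsin : |Real.sin (θ / 2)| = Real.sin x := by
      have h1 : |Real.sin (θ / 2)| = |Real.sin (|θ| / 2)| := by
        rcases abs_cases θ with ⟨h, _⟩ | ⟨h, _⟩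
        · rw [h]
        · rw [h, neg_div, Real.sin_neg, abs_neg]
      rw [h1, ← hxdef, abs_of_nonneg hs0]
    have hsx : Real.sin x ≤ x := Real.sin_le hx0.le
    have hlow : x - x ^ 3 / 6 ≤ Real.sin x := sin_lower hx0.le
    rw [habs2, hsin]
    have hθ2 : θ ^ 2 = 4 * x ^ 2 := by
      rw [hxdef, div_pow, sq_abs]; ring
    constructor
    · have := Real.rpow_le_rpow hs0 hsx (by linarith : (0:ℝ) ≤ α)
      linarith
    · have hkey := rpow_sub_rpow_le' hα.le hs0 hsx hx0
      have hxα : (0:ℝ) < x ^ α := Real.rpow_pos_of_pos hx0 α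
      have h3 : α * x ^ α * (x - Real.sin x) ≤ α * x ^ α * (x ^ 3 / 6) := by
        apply mul_le_mul_of_nonneg_left (by linarith) (by positivity)
      rw [hθ2]
      nlinarith [mul_pos hx0 hxα]
  refine ⟨main, ?_⟩
  intro h t hh k hk
  rcases eq_or_ne k 0 with rfl | hk0
  · simp [Real.zero_rpow (by linarith : α ≠ 0), abs_of_pos hh,
      Real.zero_rpow (by linarith : (2:ℝ) + α ≠ 0)]
  · set θ : ℝ := h * k with hθdef
    have hθ0 : 0 < |θ| := by
      rw [hθdef, abs_mul]
      have : (0:ℝ) < |(k:ℝ)| := by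
        simp only [abs_pos]
        exact_mod_cast hk0
      positivity
    obtain ⟨h1, h2⟩ := main θ hθ0 hk
    have habs : |(|Real.sin (θ / 2)| ^ α - |θ / 2| ^ α)| = |θ / 2| ^ α - |Real.sin (θ / 2)| ^ α := by
      rw [abs_sub_comm, abs_of_nonneg h1]
    have hK : (0:ℝ) < |(k:ℝ)| := by
      simp only [abs_pos]; exact_mod_cast hk0
    have hfac : (0:ℝ) ≤ 2 ^ α * |t| / h ^ α := by positivity
    have step : 2 ^ α * |t| / h ^ α * |(|Real.sin (θ / 2)| ^ α - |θ / 2| ^ α)| ≤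
        2 ^ α * |t| / h ^ α * (α / 24 * θ ^ 2 * |θ / 2| ^ α) := by
      rw [habs]
      exact mul_le_mul_of_nonneg_left h2 hfac
    have heq : 2 ^ α * |t| / h ^ α * (α / 24 * θ ^ 2 * |θ / 2| ^ α) =
        α * |t| / 24 * h ^ 2 * |(k:ℝ)| ^ (2 + α) := by
      have e1 : |θ / 2| = h * |(k:ℝ)| / 2 := by
        rw [hθdef, abs_div, abs_mul, abs_of_pos hh]; norm_num
      have e2 : (h * |(k:ℝ)| / 2) ^ α = h ^ α * |(k:ℝ)| ^ α / 2 ^ α := by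
        rw [Real.div_rpow (by positivity) (by norm_num),
          Real.mul_rpow hh.le (abs_nonneg _)]
      have e3 : |(k:ℝ)| ^ (2 + α) = |(k:ℝ)| ^ 2 * |(k:ℝ)| ^ α := by
        rw [Real.rpow_add hK, Real.rpow_two]
      have e4 : θ ^ 2 = h ^ 2 * |(k:ℝ)| ^ 2 := by
        rw [hθdef, mul_pow, ← sq_abs ((k:ℝ))]
      have hhα : (0:ℝ) < h ^ α := Real.rpow_pos_of_pos hh α
      have h2α : (0:ℝ) < (2:ℝ) ^ α := Real.rpow_pos_of_pos (by norm_num) α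
      rw [e1, e2, e3, e4]
      field_simp
    calc 2 ^ α * |t| / h ^ α * |(|Real.sin (h * k / 2)| ^ α - |h * (k : ℝ) / 2| ^ α)|
        = 2 ^ α * |t| / h ^ α * |(|Real.sin (θ / 2)| ^ α - |θ / 2| ^ α)| := by rw [hθdef]
      _ ≤ 2 ^ α * |t| / h ^ α * (α / 24 * θ ^ 2 * |θ / 2| ^ α) := step
      _ = α * |t| / 24 * h ^ 2 * |(k:ℝ)| ^ (2 + α) := heq

end
end
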